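/- If ω : [0,1] → X is Lipschitz continuous in a metric space (X,d), then the metric derivative |ω'|(t) := lim_{h→0} d(ω(t+h), ω(t))/|h| exists for almost every t ∈ [0,1], and for all 0 ≤ t < s ≤ 1, d(ω(t), ω(s)) ≤ ∫_t^s |ω'|(τ) dτ. -/

import Mathlib

open MeasureTheory Filter Set Topology
open scoped NNReal

/-!
Fix a countable dense family of points `p i` of `[0,1]` and extend each distance function
`x ↦ d(ω x, ω (p i))` to a `K`-Lipschitz function `ψ i` on `ℝ`. The candidate metric derivative is
`m = ⨆ i, |ψ i'|`, a bounded measurable function. Each `ψ i` satisfies the fundamental theorem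
of calculus, so `d(ω a, ω b) ≤ 2 d(ω a, ω (p i)) + ψ i b - ψ i a ≤ 2 K |a - p i| + ∫_a^b m`, and
letting `p i → a` gives `d(ω a, ω b) ≤ ∫_a^b m`. At almost every `t` all `ψ i` are differentiable
and `t` is a Lebesgue point of `m`. There `d(ω (t + h), ω t) / |h|` is bounded below by the
difference quotients of every `ψ i`, which tend to `|ψ i' t|`, and above by the averages
`|∫_t^{t+h} m| / |h|`, which tend to `m t`.
-/

theorem HasDerivAt.tendsto_abs_slope {f : ℝ → ℝ} {f' t : ℝ} (hf : HasDerivAt f f' t) :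
    Tendsto (fun h => |f (t + h) - f t| / |h|) (𝓝[≠] 0) (𝓝 |f'|) := by
  simpa only [smul_eq_mul, inv_mul_eq_div, abs_div] using
    (hasDerivAt_iff_tendsto_slope_zero.1 hf).abs

theorem tendsto_div_abs_of_isLUB_abs_deriv {ι : Type*} {g : ι → ℝ → ℝ} {g' : ι → ℝ}
    {F f : ℝ → ℝ} {t m : ℝ} {l : Filter ℝ} (hl : l ≤ 𝓝[≠] 0)
    (hg : ∀ i, HasDerivAt (g i) (g' i) t) (hm : IsLUB (range fun i => |g' i|) m)
    (hF : HasDerivAt F m t) (hlow : ∀ i, ∀ᶠ h in l, |g i (t + h) - g i t| ≤ f h)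
    (hup : ∀ᶠ h in l, f h ≤ |F (t + h) - F t|) :
    Tendsto (fun h => f h / |h|) l (𝓝 m) := by
  have hne : ∀ᶠ h in l, h ≠ 0 := hl self_mem_nhdsWithin
  refine tendsto_order.2 ⟨fun a ha => ?_, fun a ha => ?_⟩
  · obtain ⟨_, ⟨i, rfl⟩, hai, -⟩ := hm.exists_between ha
    filter_upwards [((hg i).tendsto_abs_slope.mono_left hl).eventually_const_lt hai, hlow i, hne]
      with h hlt hle _
    exact hlt.trans_le (div_le_div_of_nonneg_right hle (abs_nonneg h))
  · obtain ⟨_, ⟨i, rfl⟩, -, him⟩ := hm.exists_between (sub_one_lt m)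
    have habs : |m| = m := abs_of_nonneg ((abs_nonneg _).trans him)
    filter_upwards [((habs ▸ hF.tendsto_abs_slope).mono_left hl).eventually_lt_const ha, hup, hne]
      with h hlt hle _
    exact (div_le_div_of_nonneg_right hle (abs_nonneg h)).trans_lt hlt

theorem LipschitzOnWith.dist_left {α X : Type*} [PseudoEMetricSpace α] [PseudoMetricSpace X]
    {f : α → X} {K : ℝ≥0} {s : Set α} (hf : LipschitzOnWith K f s) (y : X) :
    LipschitzOnWith K (fun x => dist (f x) y) s := by
  simpa only [one_mul, Function.comp_def] using (LipschitzWith.dist_left y).comp_lipschitzOnWith hf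

section DistanceFunctions

variable {X : Type*} [PseudoMetricSpace X] {ω : ℝ → X} {K : ℝ≥0} {s : Set ℝ}
  {ι : Type*} {p : ι → ℝ} {ψ : ι → ℝ → ℝ}

theorem bddAbove_range_abs_deriv (hψ : ∀ i, LipschitzWith K (ψ i)) (τ : ℝ) :
    BddAbove (range fun i => |deriv (ψ i) τ|) :=
  ⟨K, forall_mem_range.2 fun i => norm_deriv_le_of_lipschitz (hψ i)⟩

theorem locallyIntegrable_iSup_abs_deriv [Countable ι] (hψ : ∀ i, LipschitzWith K (ψ i)) :
    LocallyIntegrable (fun τ => ⨆ i, |deriv (ψ i) τ|) volume := by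
  refine (locallyIntegrable_const (K : ℝ)).mono
    (Measurable.iSup fun i => (measurable_deriv (ψ i)).abs).aestronglyMeasurable
    (ae_of_all _ fun τ => ?_)
  rw [Real.norm_of_nonneg (Real.iSup_nonneg fun i => abs_nonneg _), NNReal.norm_eq]
  exact Real.iSup_le (fun i => norm_deriv_le_of_lipschitz (hψ i)) K.coe_nonneg

theorem dist_le_integral_iSup_abs_deriv [Countable ι] (hω : LipschitzOnWith K ω s)
    (hps : ∀ i, p i ∈ s) (hsp : s ⊆ closure (range p)) (hψ : ∀ i, LipschitzWith K (ψ i))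
    (hψω : ∀ i, EqOn (fun x => dist (ω x) (ω (p i))) (ψ i) s)
    {a b : ℝ} (ha : a ∈ s) (hb : b ∈ s) (hab : a ≤ b) :
    dist (ω a) (ω b) ≤ ∫ τ in a..b, ⨆ i, |deriv (ψ i) τ| := by
  set I := ∫ τ in a..b, ⨆ i, |deriv (ψ i) τ|
  have hnear : ∀ u ∈ range p, dist (ω a) (ω b) ≤ I + 2 * (K * dist u a) := by
    rintro _ ⟨i, rfl⟩
    have hac : AbsolutelyContinuousOnInterval (ψ i) a b :=
      (hψ i).lipschitzOnWith.absolutelyContinuousOnInterval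
    have hftc : ψ i b - ψ i a = ∫ τ in a..b, deriv (ψ i) τ := hac.integral_deriv_eq_sub.symm
    have hderiv_le : ∫ τ in a..b, deriv (ψ i) τ ≤ I :=
      intervalIntegral.integral_mono_on hab hac.intervalIntegrable_deriv
        ((locallyIntegrable_iSup_abs_deriv hψ).integrableOn_isCompact
          isCompact_uIcc).intervalIntegrable
        fun τ _ => (le_abs_self _).trans (le_ciSup (bddAbove_range_abs_deriv hψ τ) i)
    have hclose : dist (ω a) (ω (p i)) ≤ K * dist (p i) a := by
      rw [dist_comm (p i)]; exact hω.dist_le_mul a ha (p i) (hps i)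
    have htri := dist_triangle_right (ω a) (ω b) (ω (p i))
    rw [← hψω i ha, ← hψω i hb] at hftc
    linarith
  have hlim : Tendsto (fun u => I + 2 * (K * dist u a)) (𝓝[range p] a) (𝓝 I) := by
    have : Continuous fun u => I + 2 * (K * dist u a) := by fun_prop
    simpa using (this.continuousWithinAt (s := range p) (x := a)).tendsto
  have := mem_closure_iff_nhdsWithin_neBot.1 (hsp ha)
  exact ge_of_tendsto hlim (eventually_nhdsWithin_of_forall hnear)

theorem dist_le_abs_integral_iSup_abs_deriv [Countable ι] (hω : LipschitzOnWith K ω s)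
    (hps : ∀ i, p i ∈ s) (hsp : s ⊆ closure (range p)) (hψ : ∀ i, LipschitzWith K (ψ i))
    (hψω : ∀ i, EqOn (fun x => dist (ω x) (ω (p i))) (ψ i) s)
    {a b : ℝ} (ha : a ∈ s) (hb : b ∈ s) :
    dist (ω a) (ω b) ≤ |∫ τ in a..b, (⨆ i, |deriv (ψ i) τ|)| := by
  rcases le_total a b with hab | hba
  · exact (dist_le_integral_iSup_abs_deriv hω hps hsp hψ hψω ha hb hab).trans (le_abs_self _)
  · rw [dist_comm, intervalIntegral.integral_symm, abs_neg]
    exact (dist_le_integral_iSup_abs_deriv hω hps hsp hψ hψω hb ha hba).trans (le_abs_self _)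

theorem ae_tendsto_dist_div_abs_iSup_abs_deriv [Countable ι] (hω : LipschitzOnWith K ω s)
    (hps : ∀ i, p i ∈ s) (hsp : s ⊆ closure (range p)) (hψ : ∀ i, LipschitzWith K (ψ i))
    (hψω : ∀ i, EqOn (fun x => dist (ω x) (ω (p i))) (ψ i) s) :
    ∀ᵐ t, t ∈ s → Tendsto (fun h => dist (ω (t + h)) (ω t) / |h|)
      (𝓝[{h | h ≠ 0 ∧ t + h ∈ s}] 0) (𝓝 (⨆ i, |deriv (ψ i) t|)) := by
  filter_upwards [ae_all_iff.2 fun i => (hψ i).ae_differentiableAt,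
    LocallyIntegrable.ae_hasDerivAt_integral (locallyIntegrable_iSup_abs_deriv hψ)]
    with t hdiff hint ht
  obtain ⟨_, i, -⟩ := closure_nonempty_iff.1 ⟨t, hsp ht⟩
  have : Nonempty ι := ⟨i⟩
  refine tendsto_div_abs_of_isLUB_abs_deriv (nhdsWithin_mono 0 fun h hh => hh.1)
    (fun i => (hdiff i).hasDerivAt) (isLUB_ciSup (bddAbove_range_abs_deriv hψ t)) (hint t)
    (fun i => ?_) ?_
  all_goals filter_upwards [self_mem_nhdsWithin] with h hh
  · rw [← hψω i hh.2, ← hψω i ht]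
    exact abs_dist_sub_le _ _ _
  · rw [intervalIntegral.integral_same, sub_zero, dist_comm]
    exact dist_le_abs_integral_iSup_abs_deriv hω hps hsp hψ hψω ht hh.2

end DistanceFunctions

/-- If `ω : [0,1] → X` is Lipschitz, then the metric derivative
`|ω'|(t) = lim_{h→0} d(ω(t+h), ω(t))/|h|` exists for a.e. `t ∈ [0,1]`, and for all
`0 ≤ t < s ≤ 1` we have `d(ω t, ω s) ≤ ∫_t^s |ω'|(τ) dτ`. -/
theorem lipschitz_metric_derivative_exists {X : Type*} [MetricSpace X]
    (ω : ℝ → X) (K : NNReal) (hω : LipschitzOnWith K ω (Set.Icc (0:ℝ) 1)) :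
    ∃ md : ℝ → ℝ,
      (∀ᵐ t ∂(volume.restrict (Set.Icc (0:ℝ) 1)),
        Tendsto (fun h : ℝ => dist (ω (t + h)) (ω t) / |h|)
          (nhdsWithin 0 {h : ℝ | h ≠ 0 ∧ t + h ∈ Set.Icc (0:ℝ) 1}) (nhds (md t))) ∧
      (∀ t s : ℝ, 0 ≤ t → t < s → s ≤ 1 →
        dist (ω t) (ω s) ≤ ∫ τ in t..s, md τ) := by
  obtain ⟨C, hCs, hC, hsC⟩ :=
    (TopologicalSpace.IsSeparable.of_separableSpace (Icc (0:ℝ) 1)).exists_countable_dense_subset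
  have := hC.to_subtype
  have hps : ∀ u : C, (u : ℝ) ∈ Icc (0:ℝ) 1 := fun u => hCs u.2
  have hsp : Icc (0:ℝ) 1 ⊆ closure (range ((↑) : C → ℝ)) := by rwa [Subtype.range_coe]
  choose ψ hψ hψω using fun u : C => (hω.dist_left (ω u)).extend_real
  refine ⟨fun τ => ⨆ u, |deriv (ψ u) τ|, ?_, fun t s ht hts hs => ?_⟩
  · exact (ae_restrict_iff' measurableSet_Icc).2
      (ae_tendsto_dist_div_abs_iSup_abs_deriv hω hps hsp hψ hψω)
  · exact dist_le_integral_iSup_abs_deriv hω hps hsp hψ hψω ⟨ht, (hts.trans_le hs).le⟩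
      ⟨(ht.trans_lt hts).le, hs⟩ hts.le
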